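/- Let V be a vertex operator algebra satisfying the C₂-cofiniteness condition (dim V/C₂(V) < ∞) and M a subspace with C₂(V) ⊆ M. If u ∈ ⊕_{i=1}^k V_i for some positive integer k (i.e. u has positive weights), then u ∈ sr_{0,-1}(M). -/

import Mathlib

open scoped BigOperators

noncomputable section

/-- The generalized binomial coefficient `p choose i` for `p : ℤ`, as a complex number. -/
def zchoose (p : ℤ) (i : ℕ) : ℂ :=
  (∏ j ∈ Finset.range i, ((p : ℂ) - (j : ℂ))) / (i.factorial : ℂ)

/-- A vertex algebra over `ℂ`: a bilinear system of modes `u ↦ u_n`, a vacuum vector `𝟙`,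
truncation, vacuum/creation axioms and the Borcherds (Jacobi) identity. -/
structure VertexAlgebra (V : Type) [AddCommGroup V] [Module ℂ V] where
  mode : V → ℤ → V → V
  one : V
  mode_add_left : ∀ (u v : V) (n : ℤ) (w : V), mode (u + v) n w = mode u n w + mode v n w
  mode_smul_left : ∀ (c : ℂ) (u : V) (n : ℤ) (w : V), mode (c • u) n w = c • mode u n w
  mode_add_right : ∀ (u : V) (n : ℤ) (v w : V), mode u n (v + w) = mode u n v + mode u n w
  mode_smul_right : ∀ (u : V) (n : ℤ) (c : ℂ) (v : V), mode u n (c • v) = c • mode u n v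
  trunc : ∀ u v : V, ∃ N : ℤ, ∀ n ≥ N, mode u n v = 0
  vacuum_left : ∀ (n : ℤ) (v : V), mode one n v = if n = -1 then v else 0
  creation_nonneg : ∀ (u : V) (n : ℤ), 0 ≤ n → mode u n one = 0
  creation : ∀ u : V, mode u (-1) one = u
  borcherds : ∀ (u v w : V) (p q r : ℤ),
    ∑ᶠ i : ℕ, zchoose p i • mode (mode u (r + i) v) (p + q - i) w =
      ∑ᶠ i : ℕ, ((-1 : ℂ) ^ i * zchoose r i) •
        (mode u (p + r - i) (mode v (q + i) w) -
          ((-1 : ℂ) ^ r) • mode v (q + r - i) (mode u (p + i) w))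

/-- A list of mode indices all equal to `0` or `-1`. -/
def GoodIdx (ns : List ℤ) : Prop := ∀ n ∈ ns, n = 0 ∨ n = -1

namespace VertexAlgebra

variable {V : Type} [AddCommGroup V] [Module ℂ V] (VA : VertexAlgebra V)

/-- The translation operator `𝒟 v = v_{-2} 𝟙`. -/
def D (v : V) : V := VA.mode v (-2) VA.one

/-- `C₂(V) = span_ℂ { u_{-2} v }`. -/
def C2 : Submodule ℂ V := Submodule.span ℂ {w : V | ∃ u v : V, w = VA.mode u (-2) v}

/-- `Cₙ(V) = span_ℂ { u_{-n} v }`. -/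
def Cn (n : ℕ) : Submodule ℂ V :=
  Submodule.span ℂ {w : V | ∃ u v : V, w = VA.mode u (-(n : ℤ)) v}


/-- The iterated word `a_{n₁} a_{n₂} ⋯ a_{n_t} a`. -/
def word (a : V) (ns : List ℤ) : V := ns.foldr (fun n acc => VA.mode a n acc) a

/-- The radical `r_{0,-1}(M)` of a subspace `M` with respect to the 0-th and (-1)-th products. -/
def rad (M : Set V) : Set V :=
  {v : V | ∃ m : ℕ, ∀ ns : List ℤ, GoodIdx ns → m ≤ ns.length → VA.word v ns ∈ M}

/-- The left-strong radical `lsr_{0,-1}(M)`. -/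
def lsrad (M : Set V) : Set V :=
  {v : V | ∀ b : V, ∃ m : ℕ, ∀ (ns : List ℤ) (s : ℤ), GoodIdx ns → m ≤ ns.length →
    (s = 0 ∨ s = -1) → VA.mode b s (VA.word v ns) ∈ M}

/-- The right-strong radical `rsr_{0,-1}(M)`. -/
def rsrad (M : Set V) : Set V :=
  {v : V | ∀ w : V, ∃ m : ℕ, ∀ (ns : List ℤ) (s : ℤ), GoodIdx ns → m ≤ ns.length →
    (s = 0 ∨ s = -1) → VA.mode (VA.word v ns) s w ∈ M}

/-- The strong radical `sr_{0,-1}(M) = lsr_{0,-1}(M) ∩ rsr_{0,-1}(M)`. -/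
def srad (M : Set V) : Set V := VA.lsrad M ∩ VA.rsrad M

/-- `M` is a Mathieu-Zhao subspace of `V` with respect to the 0-th and (-1)-th products. -/
def IsMZ (M : Set V) : Prop := VA.rad M = VA.srad M

/-- A (two-sided) ideal of a vertex algebra. -/
def IsIdeal (I : Submodule ℂ V) : Prop :=
  ∀ (v w : V) (n : ℤ), w ∈ I → VA.mode v n w ∈ I ∧ VA.mode w n v ∈ I

/-- `t`-th power of `a` under the (-1)-th product: `a_{-1}(a_{-1}(⋯ a))`, with `pow a 0 = 𝟙`. -/
def pow (a : V) (t : ℕ) : V :=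
  Nat.rec VA.one (fun _ acc => VA.mode a (-1) acc) t

end VertexAlgebra

/-- A homomorphism of vertex algebras: a linear map preserving all modes and the vacuum. -/
def VertexAlgebra.IsHom {V W : Type} [AddCommGroup V] [Module ℂ V] [AddCommGroup W]
    [Module ℂ W] (VA : VertexAlgebra V) (WA : VertexAlgebra W) (f : V →ₗ[ℂ] W) : Prop :=
  f VA.one = WA.one ∧ ∀ (u v : V) (n : ℤ), f (VA.mode u n v) = WA.mode (f u) n (f v)

/-- A vertex operator algebra: a `ℤ`-graded vertex algebra with finite-dimensional
pieces, grading bounded below, and a conformal vector `ω` whose modes `L(n) = ω_{n+1}`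
satisfy the Virasoro relations, give the grading by `L(0)`, and realize `L(-1) = 𝒟`. -/
structure VertexOperatorAlgebra (V : Type) [AddCommGroup V] [Module ℂ V]
    extends VertexAlgebra V where
  grade : ℤ → Submodule ℂ V
  internal : DirectSum.IsInternal grade
  one_mem : one ∈ grade 0
  mode_grade : ∀ {k m n : ℤ} {u w : V}, u ∈ grade k → w ∈ grade n →
    mode u m w ∈ grade (k + n - m - 1)
  fin_dim : ∀ n : ℤ, FiniteDimensional ℂ (grade n)
  bounded_below : ∃ n₀ : ℤ, ∀ n < n₀, grade n = ⊥
  omega : V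
  omega_mem : omega ∈ grade 2
  central_charge : ℂ
  virasoro : ∀ (m n : ℤ) (v : V),
    mode omega (m + 1) (mode omega (n + 1) v) - mode omega (n + 1) (mode omega (m + 1) v) =
      ((m : ℂ) - (n : ℂ)) • mode omega (m + n + 1) v +
        (if m + n = 0 then (((m : ℂ) ^ 3 - (m : ℂ)) / 12) * central_charge else 0) • v
  L0_grading : ∀ (n : ℤ) (v : V), v ∈ grade n → mode omega 1 v = (n : ℂ) • v
  L_neg1 : ∀ v : V, mode omega 0 v = mode v (-2) one

/-! The words `u_{n₁} ⋯ u_{n_t} u` with `nᵢ ∈ {0, -1}` are controlled by two facts from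
the Borcherds identity: `C₂(V)` is stable under `b_s ·` and `· _s w` for `s ≤ 0`, and
`u_0 u ∈ C₂(V)` by skew symmetry, so `u_0` (a derivation of the `(-1)`-product) maps every
power `u^t` into `C₂(V)`. Hence such a word lies in `C₂(V)` unless it is the power `u^{t+1}`.
A power `u^t` of a vector of positive weight has weight at least `t`, and since `C₂(V)` is a
graded subspace of finite codimension it contains `V_n` for all large `n`. So long words lie in
`C₂(V)`, and one more `0`- or `(-1)`-product on either side keeps them in `C₂(V) ⊆ M`. -/

theorem Submodule.finsum_mem {ι R M : Type*} [Semiring R] [AddCommMonoid M] [Module R M]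
    (p : Submodule R M) {f : ι → M} (h : ∀ i, f i ∈ p) : ∑ᶠ i, f i ∈ p :=
  finsum_induction (· ∈ p) p.zero_mem (fun _ _ => p.add_mem) h

theorem Submodule.finsum_sub_mem_of_forall_ne {ι R M : Type*} [Ring R] [AddCommGroup M]
    [Module R M] (p : Submodule R M) {f : ι → M} (hf : f.support.Finite) (a : ι)
    (h : ∀ i ≠ a, f i ∈ p) : ∑ᶠ i, f i - f a ∈ p := by
  classical
  rw [finsum_eq_sum_of_support_subset f (s := insert a hf.toFinset) (by simp),
    ← Finset.add_sum_erase _ _ (Finset.mem_insert_self _ _), add_sub_cancel_left]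
  exact p.sum_mem fun i hi => h i (Finset.ne_of_mem_erase hi)

theorem zchoose_zero_right (p : ℤ) : zchoose p 0 = 1 := by simp [zchoose]

theorem zchoose_one_right (p : ℤ) : zchoose p 1 = p := by simp [zchoose]

theorem zchoose_zero_left {i : ℕ} (hi : i ≠ 0) : zchoose 0 i = 0 := by
  obtain ⟨j, rfl⟩ := Nat.exists_eq_succ_of_ne_zero hi
  simp [zchoose, Finset.prod_range_succ']

namespace VertexAlgebra

variable {V : Type} [AddCommGroup V] [Module ℂ V] (VA : VertexAlgebra V)

def modeₗ (n : ℤ) : V →ₗ[ℂ] V →ₗ[ℂ] V :=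
  LinearMap.mk₂ ℂ (fun u v => VA.mode u n v) (fun u v w => VA.mode_add_left u v n w)
    (fun c u w => VA.mode_smul_left c u n w)
    (fun u => VA.mode_add_right u n) (fun c u v => VA.mode_smul_right u n c v)

@[simp]
theorem modeₗ_apply (n : ℤ) (u v : V) : VA.modeₗ n u v = VA.mode u n v := rfl

@[simp]
theorem mode_zero_left (n : ℤ) (w : V) : VA.mode 0 n w = 0 :=
  LinearMap.map_zero₂ (VA.modeₗ n) w

@[simp]
theorem mode_zero_right (v : V) (n : ℤ) : VA.mode v n 0 = 0 := (VA.modeₗ n v).map_zero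

theorem commutator_formula (u v w : V) (p q : ℤ) :
    VA.mode u p (VA.mode v q w) - VA.mode v q (VA.mode u p w) =
      ∑ᶠ i : ℕ, zchoose p i • VA.mode (VA.mode u i v) (p + q - i) w := by
  have h := VA.borcherds u v w p q 0
  simp only [zero_add] at h
  rw [h, finsum_eq_single _ 0 fun i hi => by
    rw [zchoose_zero_left hi, mul_zero, zero_smul]]
  simp [zchoose_zero_right]

theorem mode_mode_eq_finsum (u v w : V) (r q : ℤ) :
    VA.mode (VA.mode u r v) q w =
      ∑ᶠ i : ℕ, ((-1 : ℂ) ^ i * zchoose r i) •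
        (VA.mode u (r - i) (VA.mode v (q + i) w) -
          ((-1 : ℂ) ^ r) • VA.mode v (q + r - i) (VA.mode u i w)) := by
  have h := VA.borcherds u v w 0 q r
  rw [finsum_eq_single _ 0 fun i hi => by rw [zchoose_zero_left hi, zero_smul]] at h
  simpa [zchoose_zero_right] using h

theorem mode_zero_mode (u v w : V) (q : ℤ) :
    VA.mode (VA.mode u 0 v) q w =
      VA.mode u 0 (VA.mode v q w) - VA.mode v q (VA.mode u 0 w) := by
  rw [commutator_formula, finsum_eq_single _ 0 fun i hi => by
    rw [zchoose_zero_left hi, zero_smul]]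
  simp [zchoose_zero_right]

theorem mode_D (x w : V) (p : ℤ) :
    VA.mode (VA.D x) p w = (-(p : ℂ)) • VA.mode x (p - 1) w := by
  have h := VA.borcherds x VA.one w p 0 (-2)
  conv_rhs at h => rw [finsum_eq_zero_of_forall_eq_zero fun i => by
    rw [VA.vacuum_left, VA.vacuum_left, if_neg (by omega), if_neg (by omega)]; simp]
  rw [finsum_eq_sum_of_support_subset _ (s := Finset.range 2) fun i hi => by
    by_contra! hi2
    simp [VA.creation_nonneg x (-2 + i) (by simp at hi2; omega)] at hi] at h
  simp [Finset.sum_range_succ, zchoose_zero_right, zchoose_one_right, VA.creation] at h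
  rw [neg_smul]
  exact eq_neg_of_add_eq_zero_left h

theorem mode_mem_C2 (x y : V) {n : ℤ} (hn : n ≤ -2) : VA.mode x n y ∈ VA.C2 := by
  induction n, hn using Int.leInductionDown generalizing x with
  | base => exact Submodule.subset_span ⟨x, y, rfl⟩
  | pred n hn ih =>
    have hD := ih (VA.D x)
    rwa [mode_D, Submodule.smul_mem_iff _ (by norm_cast; omega)] at hD

theorem mode_mem_C2_of_mem_right (b : V) {s : ℤ} (hs : s ≤ 0) {c : V} (hc : c ∈ VA.C2) :
    VA.mode b s c ∈ VA.C2 := by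
  suffices VA.C2 ≤ VA.C2.comap (VA.modeₗ s b) from this hc
  refine Submodule.span_le.2 ?_
  rintro _ ⟨x, y, rfl⟩
  have h := VA.commutator_formula b x y s (-2)
  rw [sub_eq_iff_eq_add] at h
  simp only [SetLike.mem_coe, Submodule.mem_comap, modeₗ_apply, h]
  exact VA.C2.add_mem (VA.C2.finsum_mem fun i => VA.C2.smul_mem _ (VA.mode_mem_C2 _ _ (by omega)))
    (Submodule.subset_span ⟨x, _, rfl⟩)

theorem mode_mem_C2_of_mem_left {c : V} (hc : c ∈ VA.C2) {s : ℤ} (hs : s ≤ 0) (w : V) :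
    VA.mode c s w ∈ VA.C2 := by
  suffices VA.C2 ≤ VA.C2.comap ((VA.modeₗ s).flip w) from this hc
  refine Submodule.span_le.2 ?_
  rintro _ ⟨x, y, rfl⟩
  simp only [SetLike.mem_coe, Submodule.mem_comap, LinearMap.flip_apply, modeₗ_apply,
    mode_mode_eq_finsum]
  refine VA.C2.finsum_mem fun i => VA.C2.smul_mem _ (VA.C2.sub_mem ?_ ?_)
  · exact VA.mode_mem_C2 _ _ (by omega)
  · exact VA.C2.smul_mem _ (VA.mode_mem_C2 _ _ (by omega))

theorem mode_zero_self_mem_C2 (u : V) : VA.mode u 0 u ∈ VA.C2 := by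
  set f : ℕ → V := fun i => zchoose (-1) i • VA.mode (VA.mode u i u) (-1 + 0 - i) VA.one
  have hf : f.support.Finite := by
    obtain ⟨N, hN⟩ := VA.trunc u u
    refine (Set.finite_lt_nat N.toNat).subset fun i hi => ?_
    by_contra! hi'
    simp [f, hN i (by simp at hi'; omega)] at hi
  -- skew symmetry: the commutator formula for `[u_{-1}, u_0] 𝟙` reads
  -- `-u_0 u = u_0 u + (terms in C₂)`
  have hsum : ∑ᶠ i, f i = -VA.mode u 0 u := by
    rw [← VA.commutator_formula, VA.creation_nonneg u 0 le_rfl, VA.creation]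
    simp
  have h := VA.C2.finsum_sub_mem_of_forall_ne hf 0 fun i hi =>
    VA.C2.smul_mem _ (VA.mode_mem_C2 _ _ (by omega))
  rw [hsum] at h
  simp only [f, zchoose_zero_right, one_smul, Nat.cast_zero, add_zero, sub_zero,
    VA.creation] at h
  rwa [← neg_add', ← two_smul ℂ, Submodule.neg_mem_iff,
    Submodule.smul_mem_iff _ two_ne_zero] at h

theorem word_cons (a : V) (n : ℤ) (ns : List ℤ) :
    VA.word a (n :: ns) = VA.mode a n (VA.word a ns) := rfl

theorem pow_succ (a : V) (t : ℕ) : VA.pow a (t + 1) = VA.mode a (-1) (VA.pow a t) := rfl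

theorem pow_one (a : V) : VA.pow a 1 = a := VA.creation a

theorem mode_zero_pow_mem_C2 (u : V) (t : ℕ) : VA.mode u 0 (VA.pow u t) ∈ VA.C2 := by
  induction t with
  | zero => simp [pow, VA.creation_nonneg u 0 le_rfl]
  | succ t ih =>
    rw [pow_succ, ← sub_add_cancel (VA.mode u 0 _) (VA.mode u (-1) (VA.mode u 0 (VA.pow u t))),
      ← mode_zero_mode]
    exact VA.C2.add_mem (VA.mode_mem_C2_of_mem_left (VA.mode_zero_self_mem_C2 u) (by omega) _)
      (VA.mode_mem_C2_of_mem_right u (by omega) ih)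

theorem word_mem_C2_or_eq_pow (u : V) {ns : List ℤ} (hns : GoodIdx ns) :
    VA.word u ns ∈ VA.C2 ∨ VA.word u ns = VA.pow u (ns.length + 1) := by
  induction ns with
  | nil => exact .inr (VA.pow_one u).symm
  | cons n ns ih =>
    have hn : n = 0 ∨ n = -1 := hns n List.mem_cons_self
    rcases ih fun m hm => hns m (List.mem_cons_of_mem n hm) with hC2 | hpow
    · exact .inl (VA.mode_mem_C2_of_mem_right u (by omega) hC2)
    · rcases hn with rfl | rfl
      · exact .inl (by rw [word_cons, hpow]; exact VA.mode_zero_pow_mem_C2 u _)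
      · exact .inr (congrArg (VA.mode u (-1)) hpow)

theorem mem_rad_C2_of_pow_mem_C2 {u : V} {N : ℕ} (hN : ∀ t ≥ N, VA.pow u t ∈ VA.C2) :
    u ∈ VA.rad VA.C2 :=
  ⟨N, fun ns hns hlen => (VA.word_mem_C2_or_eq_pow u hns).elim id
    fun h => h ▸ hN _ (by omega)⟩

theorem rad_C2_subset_srad {M : Submodule ℂ V} (hM : VA.C2 ≤ M) :
    VA.rad VA.C2 ⊆ VA.srad M := by
  rintro u ⟨m, hm⟩
  have hs : ∀ s : ℤ, s = 0 ∨ s = -1 → s ≤ 0 := by omega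
  exact ⟨fun b => ⟨m, fun ns s hns hlen h =>
      hM (VA.mode_mem_C2_of_mem_right b (hs s h) (hm ns hns hlen))⟩,
    fun w => ⟨m, fun ns s hns hlen h =>
      hM (VA.mode_mem_C2_of_mem_left (hm ns hns hlen) (hs s h) w)⟩⟩

end VertexAlgebra

theorem Submodule.finite_setOf_not_le_of_isHomogeneous {ι K M : Type*} [DecidableEq ι] [Field K]
    [AddCommGroup M] [Module K M] (ℳ : ι → Submodule K M) [DirectSum.Decomposition ℳ]
    {p : Submodule K M} (hp : p.IsHomogeneous ℳ) [FiniteDimensional K (M ⧸ p)] :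
    {i | ¬ ℳ i ≤ p}.Finite := by
  choose x hxℳ hxp using fun i : {i | ¬ ℳ i ≤ p} => SetLike.not_le_iff_exists.1 i.2
  have hli : LinearIndependent K fun i => p.mkQ (x i) := by
    refine linearIndependent_iff'.2 fun s g hg i hi => by_contra fun hgi => hxp i ?_
    have hsum : ∑ j ∈ s, g j • x j ∈ p := by
      rw [← Submodule.Quotient.mk_eq_zero, ← Submodule.mkQ_apply, map_sum]
      simpa using hg
    have hcomp : (DirectSum.decompose ℳ (∑ j ∈ s, g j • x j) i : M) = g i • x i := by
      simp only [DirectSum.decompose_sum, DirectSum.decompose_smul, DirectSum.sum_apply,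
        DirectSum.smul_apply, Submodule.coe_sum, Submodule.coe_smul]
      rw [Finset.sum_eq_single_of_mem i hi fun j _ hji => by
        rw [DirectSum.decompose_of_mem_ne ℳ (hxℳ j) (Subtype.coe_ne_coe.2 hji), smul_zero],
        DirectSum.decompose_of_mem_same ℳ (hxℳ i)]
    rw [← Submodule.smul_mem_iff p hgi, ← hcomp]
    exact hp i hsum
  exact Set.finite_coe_iff.1 hli.finite

namespace VertexOperatorAlgebra

open DirectSum

variable {V : Type} [AddCommGroup V] [Module ℂ V] (VOA : VertexOperatorAlgebra V)

instance : Decomposition VOA.grade := VOA.internal.chooseDecomposition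

theorem isHomogeneous_C2 : VOA.C2.IsHomogeneous VOA.grade := by
  intro i m hm
  induction hm using Submodule.span_induction with
  | mem _ h =>
    obtain ⟨x, y, rfl⟩ := h
    induction x using Decomposition.inductionOn VOA.grade with
    | zero => simp
    | @homogeneous a x =>
      induction y using Decomposition.inductionOn VOA.grade with
      | zero => simp
      | @homogeneous b y =>
        have hxy := VOA.mode_grade (m := -2) x.2 y.2
        by_cases h : a + b - -2 - 1 = i
        · rw [decompose_of_mem_same _ (h ▸ hxy)]
          exact Submodule.subset_span ⟨x, y, rfl⟩
        · rw [decompose_of_mem_ne _ hxy h]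
          exact VOA.C2.zero_mem
      | add y y' hy hy' =>
        simpa [VOA.mode_add_right] using VOA.C2.add_mem hy hy'
    | add x x' hx hx' =>
      simpa [VOA.mode_add_left] using VOA.C2.add_mem hx hx'
  | zero => simp
  | add x y _ _ hx hy =>
    simpa using VOA.C2.add_mem hx hy
  | smul c x _ hx =>
    simpa [DirectSum.smul_apply] using VOA.C2.smul_mem c hx

def gradeGE (N : ℤ) : Submodule ℂ V := ⨆ (n : ℤ) (_ : N ≤ n), VOA.grade n

theorem grade_le_gradeGE {N n : ℤ} (h : N ≤ n) : VOA.grade n ≤ VOA.gradeGE N :=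
  le_iSup₂_of_le n h le_rfl

theorem gradeGE_antitone : Antitone VOA.gradeGE := fun _ _ hNM =>
  iSup₂_le fun _ hn => VOA.grade_le_gradeGE (hNM.trans hn)

theorem exists_gradeGE_le_C2 [FiniteDimensional ℂ (V ⧸ VOA.C2)] :
    ∃ N : ℕ, VOA.gradeGE N ≤ VOA.C2 := by
  obtain ⟨b, hb⟩ := (Submodule.finite_setOf_not_le_of_isHomogeneous VOA.grade
    VOA.isHomogeneous_C2).bddAbove
  refine ⟨(b + 1).toNat, iSup₂_le fun n hn => ?_⟩
  by_contra h
  have := hb h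
  omega

theorem mode_neg_one_mem_gradeGE {s t : ℤ} {a b : V} (ha : a ∈ VOA.gradeGE s)
    (hb : b ∈ VOA.gradeGE t) : VOA.mode a (-1) b ∈ VOA.gradeGE (s + t) := by
  suffices Submodule.map₂ (VOA.modeₗ (-1)) (VOA.gradeGE s) (VOA.gradeGE t) ≤
      VOA.gradeGE (s + t) from Submodule.map₂_le.1 this a ha b hb
  simp only [gradeGE, Submodule.map₂_iSup_left, Submodule.map₂_iSup_right, iSup_le_iff,
    Submodule.map₂_le]
  intro m hm n hn x hx y hy
  have hxy := VOA.mode_grade (m := -1) hx hy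
  rw [sub_neg_eq_add, add_sub_cancel_right] at hxy
  exact VOA.grade_le_gradeGE (by omega) hxy

theorem pow_mem_gradeGE {u : V} (hu : u ∈ VOA.gradeGE 1) (t : ℕ) :
    VOA.pow u t ∈ VOA.gradeGE t := by
  induction t with
  | zero => exact VOA.grade_le_gradeGE le_rfl VOA.one_mem
  | succ t ih =>
    rw [VOA.pow_succ, Nat.cast_succ, add_comm]
    exact VOA.mode_neg_one_mem_gradeGE hu ih

end VertexOperatorAlgebra

theorem stmt16_general {V : Type} [AddCommGroup V] [Module ℂ V] (VOA : VertexOperatorAlgebra V)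
    (hc2 : FiniteDimensional ℂ (V ⧸ VOA.toVertexAlgebra.C2))
    (M : Submodule ℂ V) (hM : VOA.toVertexAlgebra.C2 ≤ M)
    (u : V) (k : ℤ) (hu : u ∈ ⨆ i ∈ Finset.Icc (1 : ℤ) k, VOA.grade i) :
    u ∈ VOA.toVertexAlgebra.srad (M : Set V) := by
  obtain ⟨N, hN⟩ := VOA.exists_gradeGE_le_C2
  have hu₁ : u ∈ VOA.gradeGE 1 :=
    iSup₂_le (fun i hi => VOA.grade_le_gradeGE (Finset.mem_Icc.1 hi).1) hu
  refine VOA.rad_C2_subset_srad hM (VOA.mem_rad_C2_of_pow_mem_C2 (N := N) fun t ht => hN ?_)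
  exact VOA.gradeGE_antitone (by exact_mod_cast ht) (VOA.pow_mem_gradeGE hu₁ t)

/-- Let `V` be a `C₂`-cofinite vertex operator algebra and `M ⊇ C₂(V)`.
If `u ∈ ⊕_{i=1}^k V_i` for some positive integer `k`, then `u ∈ sr_{0,-1}(M)`. -/
theorem stmt16 {V : Type} [AddCommGroup V] [Module ℂ V] (VOA : VertexOperatorAlgebra V)
    (hc2 : FiniteDimensional ℂ (V ⧸ VOA.toVertexAlgebra.C2))
    (M : Submodule ℂ V) (hM : VOA.toVertexAlgebra.C2 ≤ M)
    (u : V) (k : ℤ) (hk : 1 ≤ k) (hu : u ∈ ⨆ i ∈ Finset.Icc (1 : ℤ) k, VOA.grade i) :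
    u ∈ VOA.toVertexAlgebra.srad (M : Set V) :=
  stmt16_general VOA hc2 M hM u k hu
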